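/- arXiv:2103.11280 — 2 statements merged into one kernel-verified Lean document; each statement's English description precedes it below -/
import Mathlib

section
/- Let A be an i×i lower triangular real matrix with positive diagonal entries, a_{ii} its last diagonal entry, B := (A⁻¹)ᵀ, and let 1_{i} denote the i-th standard basis vector and b the i-th column of B. Then the inverse of a_{ii}² · 1_i 1_iᵀ + A Aᵀ equals B Bᵀ - (1/2) b bᵀ. -/
/-! With `S = A Aᵀ` and `u = a 1ᵢ`, the matrix to invert is the rank-one update `S + u uᵀ`, so the
Sherman–Morrison formula applies. Since `A` is lower triangular, `1ᵢ` is an eigenvector of `A`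
with eigenvalue `a = aᵢᵢ`, hence `A⁻¹ 1ᵢ = a⁻¹ 1ᵢ`. This gives `S⁻¹ u = B Bᵀ u = B 1ᵢ = b` and
`uᵀ S⁻¹ u = 1`, so the Sherman–Morrison correction is `b bᵀ / (1 + 1)`. -/

open Matrix

namespace Matrix

variable {n K : Type*} [Fintype n] [DecidableEq n] [Field K]

theorem inv_add_vecMulVec {S : Matrix n n K} (hS : IsUnit S.det) (u v : n → K)
    (h : 1 + v ⬝ᵥ S⁻¹ *ᵥ u ≠ 0) :
    (S + vecMulVec u v)⁻¹ =
      S⁻¹ - (1 + v ⬝ᵥ S⁻¹ *ᵥ u)⁻¹ • vecMulVec (S⁻¹ *ᵥ u) (v ᵥ* S⁻¹) := by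
  apply inv_eq_left_inv
  rw [sub_mul, mul_add, nonsing_inv_mul _ hS, mul_vecMulVec, smul_mul_assoc, mul_add,
    vecMulVec_mul, vecMulVec_mul_vecMulVec, vecMul_vecMul, nonsing_inv_mul _ hS, vecMul_one,
    vecMulVec_smul, ← dotProduct_mulVec]
  set d := v ⬝ᵥ S⁻¹ *ᵥ u
  set w := vecMulVec (S⁻¹ *ᵥ u) v
  calc 1 + w - (1 + d)⁻¹ • (w + d • w) = 1 + w - ((1 + d)⁻¹ * (1 + d)) • w := by module
    _ = 1 := by rw [inv_mul_cancel₀ h, one_smul, add_sub_cancel_right]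

theorem inv_mulVec_eq_inv_smul {M : Matrix n n K} (hM : IsUnit M.det) {a : K} (ha : a ≠ 0)
    {x : n → K} (hx : M *ᵥ x = a • x) : M⁻¹ *ᵥ x = a⁻¹ • x := by
  calc M⁻¹ *ᵥ x = M⁻¹ *ᵥ (M *ᵥ (a⁻¹ • x)) := by rw [mulVec_smul, hx, inv_smul_smul₀ ha]
    _ = a⁻¹ • x := by rw [mulVec_mulVec, nonsing_inv_mul _ hM, one_mulVec]

theorem inv_sq_smul_vecMulVec_add_mul_transpose [NeZero (2 : K)] {A : Matrix n n K}
    (hA : IsUnit A.det) {a : K} (ha : a ≠ 0) {x : n → K} (hx : A *ᵥ x = a • x)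
    (hxx : x ⬝ᵥ x = 1) :
    (a ^ 2 • vecMulVec x x + A * Aᵀ)⁻¹ =
      A⁻¹ᵀ * A⁻¹ - (1 / 2 : K) • vecMulVec (A⁻¹ᵀ *ᵥ x) (A⁻¹ᵀ *ᵥ x) := by
  have hAx : A⁻¹ *ᵥ x = a⁻¹ • x := inv_mulVec_eq_inv_smul hA ha hx
  have hS : IsUnit (A * Aᵀ).det := by
    rw [det_mul, det_transpose]
    exact hA.mul hA
  have hSinv : (A * Aᵀ)⁻¹ = A⁻¹ᵀ * A⁻¹ := by
    rw [Matrix.mul_inv_rev, transpose_nonsing_inv]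
  have hSu : (A * Aᵀ)⁻¹ *ᵥ (a • x) = A⁻¹ᵀ *ᵥ x := by
    rw [hSinv, ← mulVec_mulVec, mulVec_smul, hAx, smul_smul, mul_inv_cancel₀ ha, one_smul]
  have huS : (a • x) ᵥ* (A * Aᵀ)⁻¹ = A⁻¹ᵀ *ᵥ x := by
    rw [← mulVec_transpose, hSinv, transpose_mul, transpose_transpose, ← hSinv, hSu]
  have huSu : a • x ⬝ᵥ (A * Aᵀ)⁻¹ *ᵥ (a • x) = 1 := by
    rw [hSu, dotProduct_mulVec, vecMul_transpose, mulVec_smul, hAx, smul_smul,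
      mul_inv_cancel₀ ha, one_smul, hxx]
  rw [show a ^ 2 • vecMulVec x x = vecMulVec (a • x) (a • x) by
      rw [smul_vecMulVec, vecMulVec_smul, smul_smul, sq],
    add_comm (vecMulVec _ _), inv_add_vecMulVec hS _ _ (by rw [huSu, one_add_one_eq_two]; exact two_ne_zero),
    huSu, hSu, huS, hSinv, one_add_one_eq_two, one_div]

theorem IsLowerTriangular.mulVec_single_top {ι R : Type*} [Fintype ι] [DecidableEq ι]
    [LinearOrder ι] [OrderTop ι] [CommSemiring R] {M : Matrix ι ι R} (hM : M.IsLowerTriangular) :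
    M *ᵥ Pi.single ⊤ 1 = M ⊤ ⊤ • Pi.single ⊤ 1 := by
  ext k
  rcases eq_or_lt_of_le (le_top : k ≤ ⊤) with rfl | hk
  · simp
  · simp [hM (OrderDual.toDual_lt_toDual.2 hk), hk.ne]

end Matrix

theorem lemma_3_1 (i : ℕ) (A : Matrix (Fin (i + 1)) (Fin (i + 1)) ℝ)
    (hlow : ∀ k l : Fin (i + 1), k < l → A k l = 0)
    (hdiag : ∀ k : Fin (i + 1), 0 < A k k)
    (B : Matrix (Fin (i + 1)) (Fin (i + 1)) ℝ) (hB : B = A⁻¹ᵀ)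
    (e : Fin (i + 1) → ℝ) (he : e = Pi.single (Fin.last i) 1)
    (b : Fin (i + 1) → ℝ) (hb : b = fun k => B k (Fin.last i)) :
    ((A (Fin.last i) (Fin.last i)) ^ 2 • vecMulVec e e + A * Aᵀ)⁻¹ =
      B * Bᵀ - (1 / 2 : ℝ) • vecMulVec b b := by
  have hA : A.IsLowerTriangular := fun k l hkl => hlow k l hkl
  have hdet : IsUnit A.det := by
    rw [det_of_isLowerTriangular A hA]
    exact (Finset.prod_pos fun k _ => hdiag k).ne'.isUnit
  have hAe : A *ᵥ e = A (Fin.last i) (Fin.last i) • e := he ▸ hA.mulVec_single_top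
  have hBe : B *ᵥ e = b := by
    rw [hb, he, mulVec_single_one]
    rfl
  have hBt : Bᵀ = A⁻¹ := by rw [hB, transpose_transpose]
  rw [inv_sq_smul_vecMulVec_add_mul_transpose hdet (hdiag _).ne' hAe (by simp [he]), ← hB,
    ← hBt, hBe]
end

section
/- Let r₁,…,r_K be positive reals summing to 1 and c₂,…,c_K positive reals. The matrix diag(r₂/c₂²,…,r_K/c_K²) - α αᵀ, where α_k = r_k/c_k, is positive definite. -/
/-!
With `y = x / c`, the quadratic form of the matrix at `x` is `∑ r y² - (∑ r y)²`, i.e. the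
matrix is the congruence `D (diag r - r rᵀ) D` with `D = diag c⁻¹`. By the weighted
Cauchy–Schwarz inequality `(∑ r y)² ≤ (∑ r) ∑ r y²`, and `∑ r = 1 - r₁ < 1`, so the form is
positive at every `y ≠ 0`.
-/

open Matrix

theorem Finset.sq_sum_mul_le_sum_mul_sum_mul_sq {ι R : Type*} [CommSemiring R] [LinearOrder R]
    [IsStrictOrderedRing R] [ExistsAddOfLE R] (s : Finset ι) {w : ι → R}
    (hw : ∀ i ∈ s, 0 ≤ w i) (y : ι → R) :
    (∑ i ∈ s, w i * y i) ^ 2 ≤ (∑ i ∈ s, w i) * ∑ i ∈ s, w i * y i ^ 2 :=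
  Finset.sum_sq_le_sum_mul_sum_of_sq_le_mul s hw
    (fun i hi => mul_nonneg (hw i hi) (sq_nonneg _)) fun _ _ => le_of_eq (by ring)

namespace Matrix

variable {n R : Type*} [Fintype n] [DecidableEq n]

theorem dotProduct_diagonal_sub_vecMulVec_mulVec [CommRing R] (w x : n → R) :
    x ⬝ᵥ ((diagonal w - vecMulVec w w) *ᵥ x) = ∑ i, w i * x i ^ 2 - (∑ i, w i * x i) ^ 2 := by
  rw [sub_mulVec, dotProduct_sub, vecMulVec_mulVec, dotProduct_smul, op_smul_eq_mul,
    dotProduct_comm x w, sq]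
  congr 1
  exact Finset.sum_congr rfl fun i _ => by rw [mulVec_diagonal]; ring

theorem posDef_diagonal_sub_vecMulVec [CommRing R] [LinearOrder R] [IsStrictOrderedRing R]
    [StarRing R] [TrivialStar R] [StarOrderedRing R] {w : n → R} (hw : ∀ i, 0 < w i)
    (hsum : ∑ i, w i < 1) : (diagonal w - vecMulVec w w).PosDef := by
  refine PosDef.of_dotProduct_mulVec_pos ?_ fun x hx => ?_
  · rw [IsHermitian, conjTranspose_sub, diagonal_conjTranspose, conjTranspose_vecMulVec]
    simp
  · rw [star_trivial, dotProduct_diagonal_sub_vecMulVec_mulVec]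
    obtain ⟨i, hi⟩ := Function.ne_iff.mp hx
    have hQ : 0 < ∑ i, w i * x i ^ 2 :=
      Finset.sum_pos' (fun j _ => mul_nonneg (hw j).le (sq_nonneg _))
        ⟨i, Finset.mem_univ _, mul_pos (hw i) (pow_two_pos_of_ne_zero hi)⟩
    have hCS := Finset.univ.sq_sum_mul_le_sum_mul_sum_mul_sq (fun j _ => (hw j).le) x
    nlinarith

theorem diagonal_mul_diagonal_sub_vecMulVec_mul_diagonal [CommRing R] (d w : n → R) :
    diagonal d * (diagonal w - vecMulVec w w) * diagonal d =
      diagonal (fun i => w i * d i ^ 2) - vecMulVec (fun i => w i * d i) (fun i => w i * d i) := by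
  ext i j
  simp only [Matrix.mul_sub, diagonal_mul, mul_diagonal, sub_apply, diagonal_apply,
    vecMulVec_apply]
  split_ifs with hij
  · subst hij; ring
  · ring

end Matrix

theorem info_posDef_general (K : ℕ)
    (r₁ : ℝ) (hr₁ : 0 < r₁) (r : Fin (K - 1) → ℝ) (hr : ∀ k, 0 < r k)
    (hsum : r₁ + ∑ k, r k = 1)
    (c : Fin (K - 1) → ℝ) (hc : ∀ k, 0 < c k)
    (α : Fin (K - 1) → ℝ) (hα : α = fun k => r k / c k) :
    (Matrix.diagonal (fun k => r k / (c k) ^ 2) - vecMulVec α α).PosDef := by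
  subst hα
  have hD : Function.Injective (diagonal c⁻¹).mulVec :=
    mulVec_injective_of_isUnit <| isUnit_diagonal.mpr <|
      Pi.isUnit_iff.mpr fun k => (hc k).ne'.isUnit.inv
  have h := (posDef_diagonal_sub_vecMulVec hr (by linarith)).conjTranspose_mul_mul_same hD
  rw [diagonal_conjTranspose, star_trivial, diagonal_mul_diagonal_sub_vecMulVec_mul_diagonal] at h
  simpa [div_eq_mul_inv] using h

theorem info_posDef (K : ℕ) (hK : 2 ≤ K)
    (r₁ : ℝ) (hr₁ : 0 < r₁) (r : Fin (K - 1) → ℝ) (hr : ∀ k, 0 < r k)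
    (hsum : r₁ + ∑ k, r k = 1)
    (c : Fin (K - 1) → ℝ) (hc : ∀ k, 0 < c k)
    (α : Fin (K - 1) → ℝ) (hα : α = fun k => r k / c k) :
    (Matrix.diagonal (fun k => r k / (c k) ^ 2) - vecMulVec α α).PosDef :=
  info_posDef_general K r₁ hr₁ r hr hsum c hc α hα
end
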